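/- Suppose φ_i, ψ_i : ℝ^{d+1} → ℝ are smooth, φ_i → φ₀ and ψ_i → ψ₀ uniformly on compact sets, and ∂φ_i ⇀ ∂φ₀, ∂ψ_i ⇀ ∂ψ₀ weakly in L²_loc. Then for each pair of indices α, β, the null form Q_{αβ}(φ_i, ψ_i) = ∂_α φ_i ∂_β ψ_i − ∂_α ψ_i ∂_β φ_i converges in the sense of distributions to Q_{αβ}(φ₀, ψ₀). -/

import Mathlib

open MeasureTheory Filter
open scoped ENNReal

/-- The partial derivative in the `α`-th coordinate direction. -/
noncomputable def pd {n : ℕ} (α : Fin n) (f : (Fin n → ℝ) → ℝ) : (Fin n → ℝ) → ℝ :=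
  fun x => fderiv ℝ f x (Pi.single α 1)

section Aux

open Set

lemma pd_contDiff {n : ℕ} {f : (Fin (n+1) → ℝ) → ℝ} (hf : ContDiff ℝ (⊤ : ℕ∞) f) (α : Fin (n+1)) :
    ContDiff ℝ (⊤ : ℕ∞) (pd α f) :=
  (hf.fderiv_right (by simp)).clm_apply contDiff_const

lemma pd_continuous {n : ℕ} {f : (Fin (n+1) → ℝ) → ℝ} (hf : ContDiff ℝ (⊤ : ℕ∞) f) (α : Fin (n+1)) :
    Continuous (pd α f) := (pd_contDiff hf α).continuous

lemma pd_mul {n : ℕ} {f g : (Fin (n+1) → ℝ) → ℝ} (hf : Differentiable ℝ f)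
    (hg : Differentiable ℝ g) (α : Fin (n+1)) (x : Fin (n+1) → ℝ) :
    pd α (fun y => f y * g y) x = pd α f x * g x + f x * pd α g x := by
  unfold pd
  rw [fderiv_fun_mul (hf x) (hg x)]
  simp [smul_eq_mul]
  ring

lemma pd_comm {n : ℕ} {g : (Fin (n+1) → ℝ) → ℝ} (hg : ContDiff ℝ (⊤ : ℕ∞) g) (α β : Fin (n+1))
    (x : Fin (n+1) → ℝ) : pd α (pd β g) x = pd β (pd α g) x := by
  have hsymm : IsSymmSndFDerivAt ℝ g x := hg.contDiffAt.isSymmSndFDerivAt (by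
    rw [minSmoothness_of_isRCLikeNormedField]; exact WithTop.coe_le_coe.2 (le_top : (2:ℕ∞) ≤ ⊤))
  have hd : DifferentiableAt ℝ (fderiv ℝ g) x :=
    ((hg.fderiv_right (m := (⊤ : ℕ∞)) (by simp)).differentiable (by simp)).differentiableAt
  unfold pd
  rw [fderiv_clm_apply hd (differentiableAt_const _),
    fderiv_clm_apply hd (differentiableAt_const _)]
  simp
  exact hsymm _ _

lemma pd_hasCompactSupport {n : ℕ} {χ : (Fin (n+1) → ℝ) → ℝ} (hχ : HasCompactSupport χ)
    (α : Fin (n+1)) : HasCompactSupport (pd α χ) := by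
  have : pd α χ = (fun L : (Fin (n+1) → ℝ) →L[ℝ] ℝ => L (Pi.single α 1)) ∘ fderiv ℝ χ := rfl
  rw [this]
  exact (hχ.fderiv ℝ).comp_left rfl

lemma integrable_mul_cs {n : ℕ} {h χ : (Fin (n+1) → ℝ) → ℝ} (hh : Continuous h)
    (hχ : Continuous χ) (hχc : HasCompactSupport χ) : Integrable (fun x => h x * χ x) :=
  (hh.mul hχ).integrable_of_hasCompactSupport hχc.mul_left

lemma integral_pd_eq_zero {n : ℕ} {F : (Fin (n+1) → ℝ) → ℝ} (hF : ContDiff ℝ (⊤ : ℕ∞) F)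
    (hs : HasCompactSupport F) (α : Fin (n+1)) : ∫ x, pd α F x = 0 := by
  obtain ⟨R0, hR0⟩ := hs.isCompact.isBounded.subset_closedBall 0
  set R : ℝ := max R0 0 with hRdef
  have hR : tsupport F ⊆ Metric.closedBall 0 R :=
    hR0.trans (Metric.closedBall_subset_closedBall (le_max_left _ _))
  have hRnn : (0:ℝ) ≤ R := le_max_right _ _
  have hout : ∀ x : Fin (n+1) → ℝ, R < ‖x‖ → F x = 0 ∧ fderiv ℝ F x = 0 := by
    intro x hx
    have hxn : x ∉ tsupport F := by
      intro h
      have := hR h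
      simp only [Metric.mem_closedBall, dist_zero_right] at this
      linarith
    refine ⟨image_eq_zero_of_notMem_tsupport hxn, ?_⟩
    by_contra h
    exact hxn (support_fderiv_subset ℝ (Function.mem_support.2 h))
  set a : Fin (n+1) → ℝ := fun _ => -(R+1) with ha
  set b : Fin (n+1) → ℝ := fun _ => (R+1) with hb
  have hle : a ≤ b := fun i => by simp only [ha, hb]; linarith
  have key := MeasureTheory.integral_divergence_of_hasFDerivAt_off_countable' a b hle
      (fun i x => if i = α then F x else 0)
      (fun i x => if i = α then fderiv ℝ F x else 0) ∅ countable_empty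
      (by
        intro i
        by_cases h : i = α
        · subst h; simpa using hF.continuous.continuousOn
        · simp only [h, if_false]; exact continuousOn_const)
      (by
        intro x _ i
        by_cases h : i = α
        · subst h; simpa using (hF.differentiable (by simp) x).hasFDerivAt
        · simp only [h, if_false]; exact hasFDerivAt_const 0 x)
      (by
        have : (fun x => ∑ i, (if i = α then fderiv ℝ F x else 0) (Pi.single i 1))
            = pd α F := by
          funext x
          have : ∀ i : Fin (n+1), (if i = α then fderiv ℝ F x else 0) (Pi.single i 1)
              = if i = α then fderiv ℝ F x (Pi.single i 1) else 0 := by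
            intro i
            by_cases h : i = α <;> simp [h]
          rw [Finset.sum_congr rfl (fun i _ => this i)]
          simp [pd, Finset.sum_ite_eq']
        rw [this]
        exact (pd_continuous hF α).continuousOn.integrableOn_compact isCompact_Icc)
  -- boundary terms vanish
  have hface : ∀ (i : Fin (n+1)) (c : ℝ), |c| = R+1 → ∀ y : Fin n → ℝ,
      (if i = α then F (Fin.insertNth (α := fun _ => ℝ) i c y) else 0) = 0 := by
    intro i c hc y
    by_cases h : i = α
    · subst h
      simp only [if_true]
      refine (hout _ ?_).1
      calc R < R + 1 := by linarith
        _ = |(Fin.insertNth (α := fun _ => ℝ) i c y) i| := by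
            rw [Fin.insertNth_apply_same]; exact hc.symm
        _ ≤ ‖Fin.insertNth (α := fun _ => ℝ) i c y‖ := by
            simpa [Real.norm_eq_abs] using
              norm_le_pi_norm (Fin.insertNth (α := fun _ => ℝ) i c y) i
    · simp [h]
  have hrhs : (∑ i : Fin (n+1),
      ((∫ x in Icc (a ∘ Fin.succAbove i) (b ∘ Fin.succAbove i),
          (if i = α then F (Fin.insertNth (α := fun _ => ℝ) i (b i) x) else 0)) -
        ∫ x in Icc (a ∘ Fin.succAbove i) (b ∘ Fin.succAbove i),
          (if i = α then F (Fin.insertNth (α := fun _ => ℝ) i (a i) x) else 0))) = 0 := by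
    apply Finset.sum_eq_zero
    intro i _
    have h1 : ∀ x : Fin n → ℝ,
        (if i = α then F (Fin.insertNth (α := fun _ => ℝ) i (b i) x) else 0) = 0 :=
      hface i (b i) (by simp [hb]; linarith)
    have h2 : ∀ x : Fin n → ℝ,
        (if i = α then F (Fin.insertNth (α := fun _ => ℝ) i (a i) x) else 0) = 0 :=
      hface i (a i) (by simp [ha]; rw [abs_of_nonpos] <;> linarith)
    simp [h1, h2]
  rw [hrhs] at key
  have hsum : ∀ x : Fin (n+1) → ℝ,
      ∑ i, (if i = α then fderiv ℝ F x else 0) (Pi.single i 1) = pd α F x := by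
    intro x
    have h' : ∀ i : Fin (n+1), (if i = α then fderiv ℝ F x else 0) (Pi.single i 1)
        = if i = α then fderiv ℝ F x (Pi.single i 1) else 0 := by
      intro i; by_cases h : i = α <;> simp [h]
    rw [Finset.sum_congr rfl (fun i _ => h' i)]
    simp [pd, Finset.sum_ite_eq']
  have hext : (∫ x in Icc a b, ∑ i, (if i = α then fderiv ℝ F x else 0) (Pi.single i 1))
      = ∫ x, pd α F x := by
    rw [setIntegral_congr_fun measurableSet_Icc (fun x _ => hsum x)]
    apply setIntegral_eq_integral_of_forall_compl_eq_zero
    intro x hx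
    have hbig : R < ‖x‖ := by
      simp only [Set.mem_Icc, Pi.le_def, not_and_or, not_forall, not_le, ha, hb] at hx
      obtain ⟨i, hi⟩ | ⟨i, hi⟩ := hx
      · calc R < R + 1 := by linarith
          _ ≤ |x i| := by rw [abs_of_nonpos (by linarith)]; linarith
          _ ≤ ‖x‖ := by simpa [Real.norm_eq_abs] using norm_le_pi_norm x i
      · calc R < R + 1 := by linarith
          _ ≤ |x i| := (hi.le.trans (le_abs_self _))
          _ ≤ ‖x‖ := by simpa [Real.norm_eq_abs] using norm_le_pi_norm x i
    simp [pd, (hout x hbig).2]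
  rw [hext] at key
  exact key

lemma key_identity {n : ℕ} {f g χ : (Fin (n+1) → ℝ) → ℝ} (hf : ContDiff ℝ (⊤ : ℕ∞) f)
    (hg : ContDiff ℝ (⊤ : ℕ∞) g) (hχ : ContDiff ℝ (⊤ : ℕ∞) χ) (hχc : HasCompactSupport χ)
    (α β : Fin (n+1)) :
    ∫ x, (pd α f x * pd β g x - pd α g x * pd β f x) * χ x
      = (∫ x, f x * pd α g x * pd β χ x) - ∫ x, f x * pd β g x * pd α χ x := by
  have int1 : ∀ γ δ : Fin (n+1), Integrable (fun x => pd γ f x * pd δ g x * χ x) :=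
    fun γ δ => integrable_mul_cs ((pd_continuous hf γ).mul (pd_continuous hg δ))
      hχ.continuous hχc
  have int2 : ∀ γ δ : Fin (n+1), Integrable (fun x => f x * pd γ (pd δ g) x * χ x) :=
    fun γ δ => integrable_mul_cs (hf.continuous.mul (pd_continuous (pd_contDiff hg δ) γ))
      hχ.continuous hχc
  have int3 : ∀ γ δ : Fin (n+1), Integrable (fun x => f x * pd δ g x * pd γ χ x) :=
    fun γ δ => integrable_mul_cs (hf.continuous.mul (pd_continuous hg δ))
      (pd_continuous hχ γ) (pd_hasCompactSupport hχc γ)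
  have expand : ∀ γ δ : Fin (n+1), ∀ x,
      pd γ (fun y => f y * pd δ g y * χ y) x
        = pd γ f x * pd δ g x * χ x + (f x * pd γ (pd δ g) x * χ x
          + f x * pd δ g x * pd γ χ x) := by
    intro γ δ x
    have h1 := pd_mul (f := fun y => f y * pd δ g y) (g := χ)
      ((hf.mul (pd_contDiff hg δ)).differentiable (by simp)) (hχ.differentiable (by simp)) γ x
    have h2 := pd_mul (f := f) (g := pd δ g) (hf.differentiable (by simp))
      ((pd_contDiff hg δ).differentiable (by simp)) γ x
    rw [h1, h2]; ring
  have A : ∀ γ δ : Fin (n+1), (∫ x, pd γ f x * pd δ g x * χ x)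
      + ((∫ x, f x * pd γ (pd δ g) x * χ x) + (∫ x, f x * pd δ g x * pd γ χ x)) = 0 := by
    intro γ δ
    have h0 := integral_pd_eq_zero ((hf.mul (pd_contDiff hg δ)).mul hχ)
      (hχc.mul_left) γ
    have e1 : (fun x => pd γ (fun y => f y * pd δ g y * χ y) x)
        = fun x => pd γ f x * pd δ g x * χ x + (f x * pd γ (pd δ g) x * χ x
          + f x * pd δ g x * pd γ χ x) := by
      funext x; rw [expand γ δ x]
    have int23 : Integrable (fun x => f x * pd γ (pd δ g) x * χ x
        + f x * pd δ g x * pd γ χ x) := (int2 γ δ).add (int3 γ δ)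
    rw [e1, integral_add (int1 γ δ) int23, integral_add (int2 γ δ) (int3 γ δ)] at h0
    linarith
  have hsec : (∫ x, f x * pd α (pd β g) x * χ x) = ∫ x, f x * pd β (pd α g) x * χ x := by
    congr 1; funext x; rw [pd_comm hg α β x]
  have etarget : (fun x => (pd α f x * pd β g x - pd α g x * pd β f x) * χ x)
      = fun x => pd α f x * pd β g x * χ x - pd β f x * pd α g x * χ x := by
    funext x; ring
  rw [etarget, integral_sub (int1 α β) (int1 β α)]
  linarith [A α β, A β α]

lemma weak_mul_small {n : ℕ} {v : ℕ → (Fin (n+1) → ℝ) → ℝ} (hv : ∀ i, Continuous (v i))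
    (hconv : ∀ w : (Fin (n+1) → ℝ) → ℝ, HasCompactSupport w → MemLp w 2 volume →
      ∃ L, Tendsto (fun i => ∫ x, v i x * w x) atTop (nhds L))
    {K : Set (Fin (n+1) → ℝ)} (hK : IsCompact K)
    {g : ℕ → (Fin (n+1) → ℝ) → ℝ} (hg : ∀ i, Continuous (g i))
    (hgs : ∀ i, Function.support (g i) ⊆ K)
    (hgu : TendstoUniformlyOn g 0 atTop K) :
    Tendsto (fun i => ∫ x, v i x * g i x) atTop (nhds 0) := by
  set μ := volume.restrict K with hμ
  haveI : Fact ((1:ℝ≥0∞) ≤ 2) := ⟨one_le_two⟩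
  have hKm : MeasurableSet K := hK.measurableSet
  have hKfin : volume K < ⊤ := hK.measure_lt_top
  haveI : IsFiniteMeasure μ := by
    refine ⟨?_⟩
    have : μ Set.univ = volume K := by rw [hμ, Measure.restrict_apply_univ]
    rw [this]; exact hKfin
  have hmem : ∀ h : (Fin (n+1) → ℝ) → ℝ, Continuous h → MemLp h 2 μ := by
    intro h hh
    obtain ⟨C, hC⟩ := hK.exists_bound_of_continuousOn hh.continuousOn
    refine MemLp.of_bound hh.aestronglyMeasurable C ?_
    filter_upwards [ae_restrict_mem hKm] with x hx using hC x hx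
  set T : ℕ → (Lp ℝ 2 μ) →L[ℝ] ℝ := fun i => innerSL ℝ ((hmem (v i) (hv i)).toLp (v i)) with hT
  have hTapp : ∀ i (u : Lp ℝ 2 μ), T i u = ∫ x, v i x * u x ∂μ := by
    intro i u
    have h1 : T i u = ∫ x,
        (((hmem (v i) (hv i)).toLp (v i) : Lp ℝ 2 μ) : (Fin (n+1) → ℝ) → ℝ) x * u x ∂μ := by
      simp only [hT, innerSL_apply_apply, L2.inner_def, RCLike.inner_apply, conj_trivial]
      simp only [mul_comm]
    rw [h1]
    apply integral_congr_ae
    filter_upwards [MemLp.coeFn_toLp (hmem (v i) (hv i))] with x hx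
    rw [hx]
  have hptwise : ∀ u : Lp ℝ 2 μ, ∃ C, ∀ i, ‖T i u‖ ≤ C := by
    intro u
    set w : (Fin (n+1) → ℝ) → ℝ := K.indicator u with hw
    have hwc : HasCompactSupport w :=
      HasCompactSupport.intro hK (fun x hx => Set.indicator_of_notMem hx _)
    have hwm : MemLp w 2 volume := (memLp_indicator_iff_restrict hKm).2 (Lp.memLp u)
    obtain ⟨L, hL⟩ := hconv w hwc hwm
    have heq : ∀ i, (∫ x, v i x * w x) = T i u := by
      intro i
      rw [hTapp i u]
      calc (∫ x, v i x * w x)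
          = ∫ x, K.indicator (fun y => v i y * (u : (Fin (n+1) → ℝ) → ℝ) y) x := by
            congr 1
            funext x
            by_cases hx : x ∈ K <;> simp [hw, Set.indicator, hx]
        _ = ∫ x in K, v i x * (u : (Fin (n+1) → ℝ) → ℝ) x := integral_indicator hKm
        _ = ∫ x, v i x * (u : (Fin (n+1) → ℝ) → ℝ) x ∂μ := rfl
    have hL' : Tendsto (fun i => T i u) atTop (nhds L) := by
      simp only [← heq]; exact hL
    obtain ⟨C, hC⟩ := (hL'.norm).bddAbove_range
    exact ⟨C, fun i => hC ⟨i, rfl⟩⟩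
  obtain ⟨C, hC⟩ := banach_steinhaus hptwise
  have hgeq : ∀ i, (∫ x, v i x * g i x) = T i ((hmem (g i) (hg i)).toLp (g i)) := by
    intro i
    rw [hTapp]
    have h1 : ∫ x, v i x * g i x ∂μ = ∫ x, v i x * g i x := by
      rw [hμ]
      apply setIntegral_eq_integral_of_forall_compl_eq_zero
      intro x hx
      have hgx : g i x = 0 := by
        by_contra h; exact hx (hgs i (Function.mem_support.2 h))
      simp [hgx]
    rw [← h1]
    apply integral_congr_ae
    filter_upwards [MemLp.coeFn_toLp (hmem (g i) (hg i))] with x hx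
    rw [hx]
  have hnorm : Tendsto (fun i => ‖(hmem (g i) (hg i)).toLp (g i)‖) atTop (nhds 0) := by
    rw [Metric.tendsto_atTop]
    intro ε hε
    set B : ℝ := ((μ Set.univ) ^ ((2:ℝ≥0∞).toReal⁻¹)).toReal with hB
    have hBnn : 0 ≤ B := ENNReal.toReal_nonneg
    set δ : ℝ := ε / (B + 1) with hδdef
    have hδ : 0 < δ := div_pos hε (by linarith)
    obtain ⟨N, hN⟩ := eventually_atTop.1 (Metric.tendstoUniformlyOn_iff.1 hgu δ hδ)
    refine ⟨N, fun i hi => ?_⟩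
    have hb : ∀ᵐ x ∂μ, ‖g i x‖ ≤ δ := by
      filter_upwards [ae_restrict_mem hKm] with x hx
      have h5 := hN i hi x hx
      rw [Pi.zero_apply, dist_zero_left] at h5
      exact h5.le
    have h2 := eLpNorm_le_of_ae_bound (p := 2) (μ := μ) hb
    have hfin : (μ Set.univ) ^ ((2:ℝ≥0∞).toReal⁻¹) < ⊤ :=
      ENNReal.rpow_lt_top_of_nonneg (by positivity) (measure_ne_top μ Set.univ)
    have h3 : ‖(hmem (g i) (hg i)).toLp (g i)‖ ≤ B * δ := by
      rw [Lp.norm_toLp (g i) (hmem (g i) (hg i))]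
      calc (eLpNorm (g i) 2 μ).toReal
          ≤ ((μ Set.univ) ^ ((2:ℝ≥0∞).toReal⁻¹) * ENNReal.ofReal δ).toReal := by
            apply ENNReal.toReal_mono _ h2
            exact (ENNReal.mul_lt_top hfin ENNReal.ofReal_lt_top).ne
        _ = B * δ := by rw [ENNReal.toReal_mul, ENNReal.toReal_ofReal hδ.le, hB]
    have h4 : δ * (B + 1) = ε := div_mul_cancel₀ ε (by linarith)
    have hlt : B * δ < ε := by nlinarith
    rw [Real.dist_eq, sub_zero, abs_of_nonneg (norm_nonneg _)]
    exact lt_of_le_of_lt h3 hlt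
  have hbound : ∀ i, ‖∫ x, v i x * g i x‖ ≤ C * ‖(hmem (g i) (hg i)).toLp (g i)‖ := by
    intro i
    rw [hgeq i]
    exact le_trans ((T i).le_opNorm _)
      (mul_le_mul_of_nonneg_right (hC i) (norm_nonneg _))
  have hlim : Tendsto (fun i => C * ‖(hmem (g i) (hg i)).toLp (g i)‖) atTop (nhds 0) := by
    simpa using hnorm.const_mul C
  exact squeeze_zero_norm hbound hlim

end Aux

/-- Compensated compactness for the antisymmetric null form: if `φ_i → φ₀`, `ψ_i → ψ₀`
locally uniformly and the first derivatives converge weakly in `L²_loc`, then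
`Q_{αβ}(φ_i, ψ_i) = ∂_α φ_i ∂_β ψ_i − ∂_α ψ_i ∂_β φ_i → Q_{αβ}(φ₀, ψ₀)` in the sense of
distributions. -/
theorem stmt5 {d : ℕ}
    (φ ψ : ℕ → (Fin (d + 1) → ℝ) → ℝ) (φ₀ ψ₀ : (Fin (d + 1) → ℝ) → ℝ)
    (hφsm : ∀ i, ContDiff ℝ (⊤ : ℕ∞) (φ i)) (hψsm : ∀ i, ContDiff ℝ (⊤ : ℕ∞) (ψ i))
    (hφ₀sm : ContDiff ℝ (⊤ : ℕ∞) φ₀) (hψ₀sm : ContDiff ℝ (⊤ : ℕ∞) ψ₀)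
    (hφu : TendstoLocallyUniformly φ φ₀ atTop)
    (hψu : TendstoLocallyUniformly ψ ψ₀ atTop)
    (hφw : ∀ α : Fin (d + 1), ∀ w : (Fin (d + 1) → ℝ) → ℝ, HasCompactSupport w →
      MemLp w 2 volume →
      Tendsto (fun i => ∫ x, pd α (φ i) x * w x) atTop (nhds (∫ x, pd α φ₀ x * w x)))
    (hψw : ∀ α : Fin (d + 1), ∀ w : (Fin (d + 1) → ℝ) → ℝ, HasCompactSupport w →
      MemLp w 2 volume →
      Tendsto (fun i => ∫ x, pd α (ψ i) x * w x) atTop (nhds (∫ x, pd α ψ₀ x * w x))) :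
    ∀ α β : Fin (d + 1), ∀ χ : (Fin (d + 1) → ℝ) → ℝ, ContDiff ℝ (⊤ : ℕ∞) χ →
      HasCompactSupport χ →
      Tendsto
        (fun i => ∫ x, (pd α (φ i) x * pd β (ψ i) x - pd α (ψ i) x * pd β (φ i) x) * χ x)
        atTop
        (nhds (∫ x, (pd α φ₀ x * pd β ψ₀ x - pd α ψ₀ x * pd β φ₀ x) * χ x)) := by
  intro α β χ hχsm hχc
  have e1 : (fun i => ∫ x, (pd α (φ i) x * pd β (ψ i) x - pd α (ψ i) x * pd β (φ i) x) * χ x)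
      = fun i => (∫ x, φ i x * pd α (ψ i) x * pd β χ x)
        - ∫ x, φ i x * pd β (ψ i) x * pd α χ x := by
    funext i; exact key_identity (hφsm i) (hψsm i) hχsm hχc α β
  rw [e1, key_identity hφ₀sm hψ₀sm hχsm hχc α β]
  have main : ∀ γ δ : Fin (d+1),
      Tendsto (fun i => ∫ x, φ i x * pd γ (ψ i) x * pd δ χ x) atTop
        (nhds (∫ x, φ₀ x * pd γ ψ₀ x * pd δ χ x)) := by
    intro γ δ
    set K : Set (Fin (d+1) → ℝ) := tsupport χ with hK
    have hKc : IsCompact K := hχc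
    have hpdχc : HasCompactSupport (pd δ χ) := pd_hasCompactSupport hχc δ
    have hpdχcont : Continuous (pd δ χ) := pd_continuous hχsm δ
    -- the fixed test function
    set w : (Fin (d+1) → ℝ) → ℝ := fun x => φ₀ x * pd δ χ x with hw
    have hwcont : Continuous w := hφ₀sm.continuous.mul hpdχcont
    have hwc : HasCompactSupport w := hpdχc.mul_left
    have hwm : MemLp w 2 volume := hwcont.memLp_of_hasCompactSupport hwc
    -- the error terms
    set g : ℕ → (Fin (d+1) → ℝ) → ℝ := fun i x => (φ i x - φ₀ x) * pd δ χ x with hg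
    have hgcont : ∀ i, Continuous (g i) :=
      fun i => (((hφsm i).continuous).sub hφ₀sm.continuous).mul hpdχcont
    have hgs : ∀ i, Function.support (g i) ⊆ K := by
      intro i x hx
      have : pd δ χ x ≠ 0 := by
        intro h0
        apply hx
        simp [hg, h0]
      have hmem : x ∈ Function.support (pd δ χ) := this
      have h1 : Function.support (pd δ χ) ⊆ tsupport χ := by
        have : pd δ χ = (fun L : (Fin (d+1) → ℝ) →L[ℝ] ℝ => L (Pi.single δ 1)) ∘ fderiv ℝ χ :=
          rfl
        intro y hy
        apply support_fderiv_subset ℝ (f := χ)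
        intro hzero
        apply hy
        simp [pd, hzero]
      exact h1 hmem
    have hgu : TendstoUniformlyOn g 0 atTop K := by
      have hφK : TendstoUniformlyOn φ φ₀ atTop K :=
        (tendstoLocallyUniformlyOn_iff_tendstoUniformlyOn_of_compact hKc).1
          (hφu.tendstoLocallyUniformlyOn.mono (Set.subset_univ K))
      obtain ⟨M0, hM0⟩ := hKc.exists_bound_of_continuousOn hpdχcont.continuousOn
      set M : ℝ := max M0 0 with hMdef
      have hM : ∀ x ∈ K, ‖pd δ χ x‖ ≤ M := fun x hx => (hM0 x hx).trans (le_max_left _ _)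
      have hMnn : 0 ≤ M := le_max_right _ _
      rw [Metric.tendstoUniformlyOn_iff]
      intro ε hε
      have hδ : 0 < ε / (M + 1) := div_pos hε (by linarith)
      filter_upwards [Metric.tendstoUniformlyOn_iff.1 hφK (ε / (M+1)) hδ] with i hi x hx
      have h1 := hi x hx
      rw [dist_eq_norm] at h1
      rw [Pi.zero_apply, dist_zero_left]
      have h2 : ‖g i x‖ = ‖φ₀ x - φ i x‖ * ‖pd δ χ x‖ := by
        simp only [hg]
        rw [norm_mul, norm_sub_rev]
      rw [h2]
      have h3 : ‖pd δ χ x‖ ≤ M := hM x hx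
      have h4 : ε / (M+1) * (M + 1) = ε := div_mul_cancel₀ ε (by linarith)
      calc ‖φ₀ x - φ i x‖ * ‖pd δ χ x‖ ≤ ‖φ₀ x - φ i x‖ * (M+1) := by
            apply mul_le_mul_of_nonneg_left (by linarith) (norm_nonneg _)
        _ < (ε / (M+1)) * (M + 1) := by
            apply mul_lt_mul_of_pos_right h1 (by linarith)
        _ = ε := h4
    have hconv : ∀ u : (Fin (d+1) → ℝ) → ℝ, HasCompactSupport u → MemLp u 2 volume →
        ∃ L, Tendsto (fun i => ∫ x, pd γ (ψ i) x * u x) atTop (nhds L) :=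
      fun u huc hum => ⟨_, hψw γ u huc hum⟩
    have hB0 : Tendsto (fun i => ∫ x, pd γ (ψ i) x * g i x) atTop (nhds 0) :=
      weak_mul_small (fun i => pd_continuous (hψsm i) γ) hconv hKc hgcont hgs hgu
    have hA : Tendsto (fun i => ∫ x, pd γ (ψ i) x * w x) atTop
        (nhds (∫ x, pd γ ψ₀ x * w x)) := hψw γ w hwc hwm
    have intA : ∀ i, Integrable (fun x => pd γ (ψ i) x * w x) :=
      fun i => integrable_mul_cs (pd_continuous (hψsm i) γ) hwcont hwc
    have intB : ∀ i, Integrable (fun x => pd γ (ψ i) x * g i x) := by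
      intro i
      apply integrable_mul_cs (pd_continuous (hψsm i) γ) (hgcont i)
      exact HasCompactSupport.intro hKc (fun x hx => by
        by_contra h
        exact hx (hgs i (Function.mem_support.2 h)))
    have hsplit : ∀ i, (∫ x, φ i x * pd γ (ψ i) x * pd δ χ x)
        = (∫ x, pd γ (ψ i) x * w x) + ∫ x, pd γ (ψ i) x * g i x := by
      intro i
      rw [← integral_add (intA i) (intB i)]
      congr 1
      funext x
      simp only [hw, hg]
      ring
    have hlimeq : (∫ x, φ₀ x * pd γ ψ₀ x * pd δ χ x) = (∫ x, pd γ ψ₀ x * w x) + 0 := by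
      rw [add_zero]
      congr 1
      funext x
      simp only [hw]
      ring
    rw [hlimeq]
    simp only [hsplit]
    exact hA.add hB0
  exact (main α β).sub (main β α)
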